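/- arXiv:1010.5624 — 5 statements merged into one kernel-verified Lean document; each statement's English description precedes it below -/
import Mathlib

section
/- Every cograph G satisfies χ_lid(G) ≤ 2ω(G) − 1, where ω(G) is the clique number of G. -/
open SimpleGraph

/-- The closed neighborhood `N[v]` of a vertex `v` in a simple graph `G`. -/
def closedNbhd {V : Type*} (G : SimpleGraph V) (v : V) : Set V :=
  insert v (G.neighborSet v)

/-- A locally identifying coloring (lid-coloring): a proper vertex-coloring such that any
two adjacent vertices with distinct closed neighborhoods receive distinct sets of colors
on their closed neighborhoods. -/
def IsLidColoring {V α : Type*} (G : SimpleGraph V) (c : V → α) : Prop :=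
  (∀ ⦃u v : V⦄, G.Adj u v → c u ≠ c v) ∧
  (∀ ⦃u v : V⦄, G.Adj u v → closedNbhd G u ≠ closedNbhd G v →
    c '' closedNbhd G u ≠ c '' closedNbhd G v)

/-- `G` is `k`-lid-colorable: it admits a lid-coloring using at most `k` colors. -/
def LidColorable {V : Type*} (G : SimpleGraph V) (k : ℕ) : Prop :=
  ∃ c : V → Fin k, IsLidColoring G c

/-- `G` is bipartite: its vertex set splits into two parts such that every edge
joins the two parts. -/
def IsBipartite {V : Type*} (G : SimpleGraph V) : Prop :=
  ∃ U : Set V, ∀ ⦃u v : V⦄, G.Adj u v → (u ∈ U ↔ v ∉ U)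


section Aux

variable {V : Type*}

lemma exists_p4 {G : SimpleGraph V} {a b c d : V}
    (hab : G.Adj a b) (hbc : G.Adj b c) (hcd : G.Adj c d)
    (hac : ¬ G.Adj a c) (had : ¬ G.Adj a d) (hbd : ¬ G.Adj b d) :
    Nonempty (SimpleGraph.pathGraph 4 ↪g G) := by
  have hne_ab : a ≠ b := hab.ne
  have hne_bc : b ≠ c := hbc.ne
  have hne_cd : c ≠ d := hcd.ne
  have hne_ac : a ≠ c := fun h => had (h ▸ hcd)
  have hne_ad : a ≠ d := fun h => hbd (h ▸ hab.symm)
  have hne_bd : b ≠ d := fun h => had (h ▸ hab)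
  have hca : ¬ G.Adj c a := fun h => hac (G.adj_symm h)
  have hda : ¬ G.Adj d a := fun h => had (G.adj_symm h)
  have hdb : ¬ G.Adj d b := fun h => hbd (G.adj_symm h)
  refine ⟨⟨⟨![a,b,c,d], ?_⟩, ?_⟩⟩
  · intro i j hij
    fin_cases i <;> fin_cases j <;>
      simp_all [Matrix.cons_val_zero, Matrix.cons_val_one] <;> omega
  · intro i j
    show G.Adj (![a,b,c,d] i) (![a,b,c,d] j) ↔ _
    fin_cases i <;> fin_cases j <;>
      simp [pathGraph_adj, hab, hbc, hcd, hac, had, hbd, hca, hda, hdb,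
        hab.symm, hbc.symm, hcd.symm, G.irrefl] <;> decide

lemma p4free_induce {G : SimpleGraph V} (h : IsEmpty (SimpleGraph.pathGraph 4 ↪g G)) (s : Set V) :
    IsEmpty (SimpleGraph.pathGraph 4 ↪g G.induce s) :=
  ⟨fun f => h.false ((SimpleGraph.Embedding.induce s).comp f)⟩

lemma p4free_compl {G : SimpleGraph V} (h : IsEmpty (SimpleGraph.pathGraph 4 ↪g G)) :
    IsEmpty (SimpleGraph.pathGraph 4 ↪g Gᶜ) := by
  constructor
  intro f
  have key : ∀ i j : Fin 4, (SimpleGraph.pathGraph 4).Adj i j ↔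
      ((![1,3,0,2] : Fin 4 → Fin 4) i ≠ ![1,3,0,2] j ∧
        ¬ (SimpleGraph.pathGraph 4).Adj (![1,3,0,2] i) (![1,3,0,2] j)) := by
    intro i j
    fin_cases i <;> fin_cases j <;> simp [pathGraph_adj] <;> decide
  have inj : Function.Injective (![1,3,0,2] : Fin 4 → Fin 4) := by decide
  refine h.false ⟨⟨fun i => f (![1,3,0,2] i), fun i j hij => inj (f.injective hij)⟩, ?_⟩
  intro i j
  show G.Adj (f (![1,3,0,2] i)) (f (![1,3,0,2] j)) ↔ _
  rw [key i j]
  constructor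
  · intro hadj
    refine ⟨fun he => hadj.ne (congrArg f he), fun hp4 => ?_⟩
    exact (f.map_rel_iff.mpr hp4).2 hadj
  · rintro ⟨hne, hnp4⟩
    have : Gᶜ.Adj (f (![1,3,0,2] i)) (f (![1,3,0,2] j)) → False := fun hc => hnp4 (f.map_rel_iff.mp hc)
    rw [SimpleGraph.compl_adj] at this
    by_contra hG
    exact this ⟨fun he => hne (f.injective he), hG⟩

def GoodSplit (G : SimpleGraph V) : Prop :=
  ∃ S : Set V, S.Nonempty ∧ Sᶜ.Nonempty ∧
    ((∀ u ∈ S, ∀ w ∈ Sᶜ, ¬ G.Adj u w) ∨ (∀ u ∈ S, ∀ w ∈ Sᶜ, G.Adj u w))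

lemma goodSplit_of_compl {G : SimpleGraph V} (h : GoodSplit Gᶜ) : GoodSplit G := by
  obtain ⟨S, h1, h2, h⟩ := h
  refine ⟨S, h1, h2, ?_⟩
  rcases h with hnone | hall
  · right
    intro u hu x hx
    have hne : u ≠ x := fun he => hx (he ▸ hu)
    by_contra hna
    exact hnone u hu x hx ((SimpleGraph.compl_adj _ _ _).mpr ⟨hne, hna⟩)
  · left
    intro u hu x hx hadj
    exact ((SimpleGraph.compl_adj _ _ _).mp (hall u hu x hx)).2 hadj

lemma extend_split {G : SimpleGraph V} (hP4 : IsEmpty (SimpleGraph.pathGraph 4 ↪g G)) (v : V)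
    (A B : Set V) (hA : A.Nonempty) (hB : B.Nonempty)
    (hvA : v ∉ A) (hvB : v ∉ B) (hdisj : ∀ x, x ∈ A → x ∈ B → False)
    (hcover : ∀ w, w ≠ v → w ∈ A ∨ w ∈ B)
    (hAB : ∀ a ∈ A, ∀ b ∈ B, ¬ G.Adj a b) :
    GoodSplit G := by
  by_cases h1 : ∀ a ∈ A, ¬ G.Adj v a
  · refine ⟨A, hA, ⟨v, hvA⟩, Or.inl ?_⟩
    intro u hu x hx hadj
    by_cases hxv : x = v
    · exact h1 u hu (hxv ▸ hadj).symm
    · rcases hcover x hxv with hxA | hxB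
      · exact hx hxA
      · exact hAB u hu x hxB hadj
  by_cases h2 : ∀ b ∈ B, ¬ G.Adj v b
  · refine ⟨B, hB, ⟨v, hvB⟩, Or.inl ?_⟩
    intro u hu x hx hadj
    by_cases hxv : x = v
    · exact h2 u hu (hxv ▸ hadj).symm
    · rcases hcover x hxv with hxA | hxB
      · exact hAB x hxA u hu hadj.symm
      · exact hx hxB
  push_neg at h1 h2
  obtain ⟨a, haA, hva⟩ := h1
  obtain ⟨b, hbB, hvb⟩ := h2
  by_cases h3 : ∀ w, w ≠ v → G.Adj v w
  · refine ⟨{v}, ⟨v, rfl⟩, ⟨a, fun h => hvA (h ▸ haA)⟩, Or.inr ?_⟩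
    intro u hu x hx
    have hu' : u = v := hu
    subst hu'
    exact h3 x (fun h => hx (h ▸ rfl))
  push_neg at h3
  obtain ⟨m, hmv, hvm⟩ := h3
  refine ⟨{w | ¬ G.Adj v w ∧ w ≠ v}, ⟨m, hvm, hmv⟩, ⟨v, fun h => h.2 rfl⟩, Or.inl ?_⟩
  intro u hu x hx hux
  simp only [Set.mem_setOf_eq, Set.mem_compl_iff, not_and, not_not] at hu hx
  by_cases hxv : x = v
  · exact hu.1 (hxv ▸ hux).symm
  have hvx : G.Adj v x := by
    by_contra hnvx
    exact hxv (hx hnvx)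
  rcases hcover u (hu.2) with huA | huB
  · rcases hcover x hxv with hxA | hxB
    · exact (hP4.false (exists_p4 hux hvx.symm hvb (fun h => hu.1 h.symm)
        (hAB u huA b hbB) (hAB x hxA b hbB)).some).elim
    · exact hAB u huA x hxB hux
  · rcases hcover x hxv with hxA | hxB
    · exact hAB x hxA u huB hux.symm
    · exact (hP4.false (exists_p4 hux hvx.symm hva (fun h => hu.1 h.symm)
        (fun h => hAB a haA u huB h.symm) (fun h => hAB a haA x hxB h.symm)).some).elim

lemma seinsche_aux : ∀ n : ℕ, ∀ {V : Type u_1} [Fintype V] (G : SimpleGraph V),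
    Fintype.card V = n → IsEmpty (SimpleGraph.pathGraph 4 ↪g G) → 2 ≤ Fintype.card V →
    GoodSplit G := by
  intro n
  induction n using Nat.strong_induction_on with
  | _ n IH =>
  intro V _ G hcard hP4 h2
  classical
  by_cases hn2 : Fintype.card V = 2
  · obtain ⟨x, y, hxy, huniv⟩ := (Nat.card_eq_two_iff (α := V)).mp (by rw [Nat.card_eq_fintype_card]; exact hn2)
    have hall : ∀ w : V, w = x ∨ w = y := by
      intro w
      have : w ∈ ({x, y} : Set V) := huniv ▸ Set.mem_univ w
      simpa using this
    refine ⟨{x}, ⟨x, rfl⟩, ⟨y, fun h => hxy (Set.mem_singleton_iff.mp h).symm⟩, ?_⟩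
    by_cases hadj : G.Adj x y
    · right
      intro u hu w hw
      have hu' : u = x := hu
      subst hu'
      rcases hall w with h | h
      · exact absurd h hw
      · exact h ▸ hadj
    · left
      intro u hu w hw hG
      have hu' : u = x := hu
      subst hu'
      rcases hall w with h | h
      · exact hw h
      · exact hadj (h ▸ hG)
  · -- card ≥ 3
    have h3 : 3 ≤ Fintype.card V := by omega
    obtain ⟨v⟩ : Nonempty V := Fintype.card_pos_iff.mp (by omega)
    set W : Set V := {v}ᶜ with hW
    clear_value W
    have hcW : Fintype.card ↥W = n - 1 := by
      have e1 : Fintype.card ↥W = Fintype.card {w : V // ¬ w = v} :=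
        Fintype.card_congr (Equiv.subtypeEquivRight (by simp [hW]))
      rw [e1, Fintype.card_subtype_compl, Fintype.card_subtype_eq, hcard]
    have h2W : 2 ≤ Fintype.card ↥W := by omega
    obtain ⟨S', hS1, hS2, hsplit⟩ :=
      IH (n - 1) (by omega) (G.induce W) hcW (p4free_induce hP4 W) h2W
    have hAne : (Subtype.val '' S').Nonempty := hS1.image _
    have hBne : (Subtype.val '' S'ᶜ).Nonempty := hS2.image _
    have hvA : v ∉ (Subtype.val '' S') := by
      rintro ⟨⟨w, hw⟩, _, rfl⟩
      exact (hW ▸ hw) rfl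
    have hvB : v ∉ (Subtype.val '' S'ᶜ) := by
      rintro ⟨⟨w, hw⟩, _, rfl⟩
      exact (hW ▸ hw) rfl
    have hdisj : ∀ x, x ∈ (Subtype.val '' S') → x ∈ (Subtype.val '' S'ᶜ) → False := by
      rintro x ⟨s1, hs1, rfl⟩ ⟨s2, hs2, he⟩
      exact hs2 (Subtype.ext he ▸ hs1)
    have hcover : ∀ w, w ≠ v → w ∈ (Subtype.val '' S') ∨ w ∈ (Subtype.val '' S'ᶜ) := by
      intro w hw
      have hwW : w ∈ W := hW ▸ (hw : w ∈ ({v}ᶜ : Set V))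
      by_cases hs : (⟨w, hwW⟩ : ↥W) ∈ S'
      · exact Or.inl ⟨⟨w, hwW⟩, hs, rfl⟩
      · exact Or.inr ⟨⟨w, hwW⟩, hs, rfl⟩
    rcases hsplit with hnone | hall
    · refine extend_split hP4 v _ _ hAne hBne hvA hvB hdisj hcover ?_
      rintro a ⟨a', ha', rfl⟩ b ⟨b', hb', rfl⟩ hadj
      exact hnone a' ha' b' hb' hadj
    · refine goodSplit_of_compl (extend_split (p4free_compl hP4) v _ _ hAne hBne hvA hvB hdisj hcover ?_)
      rintro a ⟨a', ha', rfl⟩ b ⟨b', hb', rfl⟩ hadj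
      exact ((SimpleGraph.compl_adj _ _ _).mp hadj).2 (hall a' ha' b' hb')

lemma seinsche {V : Type u_1} [Fintype V] (G : SimpleGraph V)
    (hP4 : IsEmpty (SimpleGraph.pathGraph 4 ↪g G)) (h2 : 2 ≤ Fintype.card V) :
    GoodSplit G :=
  seinsche_aux (Fintype.card V) G rfl hP4 h2

section Clique
variable [Fintype V] {G : SimpleGraph V}

lemma cliqueNum_bddAbove : BddAbove {n | ∃ s, G.IsNClique n s} := by
  refine ⟨Fintype.card V, ?_⟩
  rintro n ⟨t, ht⟩
  rw [← ht.2]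
  simpa using Finset.card_le_univ t

lemma le_cliqueNum {n : ℕ} {t : Finset V} (h : G.IsNClique n t) : n ≤ G.cliqueNum :=
  le_csSup cliqueNum_bddAbove ⟨t, h⟩

lemma cliqueNum_le_card : G.cliqueNum ≤ Fintype.card V := by
  refine csSup_le ⟨0, ⟨∅, ?_⟩⟩ ?_
  · simp [SimpleGraph.isNClique_empty]
  · rintro n ⟨t, ht⟩
    rw [← ht.2]
    simpa using Finset.card_le_univ t

lemma one_le_cliqueNum [Nonempty V] : 1 ≤ G.cliqueNum := by
  refine le_cliqueNum (t := {Classical.arbitrary V}) ⟨?_, by simp⟩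
  simp [SimpleGraph.IsClique]

lemma isNClique_map_val {s : Set V} {n : ℕ} {t : Finset ↥s}
    (h : (G.induce s).IsNClique n t) :
    G.IsNClique n (t.map (Function.Embedding.subtype _)) := by
  constructor
  · rintro a ha b hb hne
    simp only [Finset.coe_map, Set.mem_image, Finset.mem_coe] at ha hb
    obtain ⟨a', ha', rfl⟩ := ha
    obtain ⟨b', hb', rfl⟩ := hb
    exact h.1 ha' hb' (fun he => hne (congrArg _ he))
  · rw [Finset.card_map]; exact h.2

lemma cliqueNum_induce_le (s : Set V) :
    haveI : Fintype ↥s := Fintype.ofFinite ↥s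
    (G.induce s).cliqueNum ≤ G.cliqueNum := by
  haveI : Fintype ↥s := Fintype.ofFinite ↥s
  obtain ⟨t, ht⟩ := (G.induce s).exists_isNClique_cliqueNum
  exact le_cliqueNum (isNClique_map_val ht)

lemma add_cliqueNum_le_join {S : Set V}
    (hall : ∀ u ∈ S, ∀ w ∈ Sᶜ, G.Adj u w) :
    haveI : Fintype ↥S := Fintype.ofFinite ↥S
    haveI : Fintype ↥Sᶜ := Fintype.ofFinite ↥Sᶜ
    (G.induce S).cliqueNum + (G.induce Sᶜ).cliqueNum ≤ G.cliqueNum := by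
  haveI : Fintype ↥S := Fintype.ofFinite ↥S
  haveI : Fintype ↥Sᶜ := Fintype.ofFinite ↥Sᶜ
  classical
  obtain ⟨t1, ht1⟩ := (G.induce S).exists_isNClique_cliqueNum
  obtain ⟨t2, ht2⟩ := (G.induce Sᶜ).exists_isNClique_cliqueNum
  have h1 := isNClique_map_val ht1
  have h2 := isNClique_map_val ht2
  have hmem1 : ∀ x ∈ t1.map (Function.Embedding.subtype _), x ∈ S := by
    intro x hx
    obtain ⟨x', _, rfl⟩ := Finset.mem_map.mp hx
    exact x'.2
  have hmem2 : ∀ x ∈ t2.map (Function.Embedding.subtype _), x ∈ Sᶜ := by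
    intro x hx
    obtain ⟨x', _, rfl⟩ := Finset.mem_map.mp hx
    exact x'.2
  have hd : Disjoint (t1.map (Function.Embedding.subtype _))
      (t2.map (Function.Embedding.subtype _)) := by
    rw [Finset.disjoint_left]
    intro x hx1 hx2
    exact hmem2 x hx2 (hmem1 x hx1)
  refine le_cliqueNum (n := _ + _)
    (t := (t1.map (Function.Embedding.subtype _)) ∪ (t2.map (Function.Embedding.subtype _))) ⟨?_, ?_⟩
  · rintro a ha b hb hne
    simp only [Finset.coe_union, Set.mem_union, Finset.mem_coe] at ha hb
    rcases ha with ha | ha <;> rcases hb with hb | hb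
    · exact h1.1 ha hb hne
    · exact hall a (hmem1 a ha) b (hmem2 b hb)
    · exact (hall b (hmem1 b hb) a (hmem2 a ha)).symm
    · exact h2.1 ha hb hne
  · rw [Finset.card_union_of_disjoint hd, Finset.card_map, Finset.card_map, ht1.2, ht2.2]
end Clique

-- mirror of the target file's definition (the real file defines closedNbhd before our lemmas)
def closedNbhd' (G : SimpleGraph V) (v : V) : Set V :=
  insert v (G.neighborSet v)

def LidN (G : SimpleGraph V) (c : V → ℕ) : Prop :=
  (∀ ⦃u v : V⦄, G.Adj u v → c u ≠ c v) ∧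
  (∀ ⦃u v : V⦄, G.Adj u v → closedNbhd' G u ≠ closedNbhd' G v →
    c '' closedNbhd' G u ≠ c '' closedNbhd' G v)

def StarP (G : SimpleGraph V) (c : V → ℕ) : Prop :=
  ∀ v, c '' closedNbhd' G v = c '' Set.univ → closedNbhd' G v = Set.univ

def HasUniv (G : SimpleGraph V) : Prop := ∃ v, closedNbhd' G v = Set.univ

def GoodC (G : SimpleGraph V) : Prop :=
  ∃ c : V → ℕ, LidN G c ∧ StarP G c ∧ (∀ v, c v < 2 * G.cliqueNum) ∧
    (HasUniv G → ∀ v, c v < 2 * G.cliqueNum - 1)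

def OkC (G : SimpleGraph V) : Prop :=
  ∃ c : V → ℕ, LidN G c ∧ ∀ v, c v < 2 * G.cliqueNum - 1

lemma mem_closedNbhd' {G : SimpleGraph V} {v x : V} :
    x ∈ closedNbhd' G v ↔ x = v ∨ G.Adj v x := by
  simp [closedNbhd']

lemma image_comp_fun (ι : ℕ → ℕ) (c : V → ℕ) (A : Set V) :
    (fun x => ι (c x)) '' A = ι '' (c '' A) := by
  rw [show (fun x => ι (c x)) = ι ∘ c from rfl, Set.image_comp]

lemma image_eq_iff_inj {ι : ℕ → ℕ} (hι : Function.Injective ι) (c : V → ℕ) (A B : Set V) :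
    (fun x => ι (c x)) '' A = (fun x => ι (c x)) '' B ↔ c '' A = c '' B := by
  constructor
  · intro h
    apply Set.image_injective.mpr hι
    rw [← Set.image_comp, ← Set.image_comp]
    exact h
  · intro h
    calc (fun x => ι (c x)) '' A = ι '' (c '' A) := image_comp_fun ι c A
      _ = ι '' (c '' B) := by rw [h]
      _ = (fun x => ι (c x)) '' B := (image_comp_fun ι c B).symm

lemma lidN_comp {G : SimpleGraph V} {ι : ℕ → ℕ} (hι : Function.Injective ι) {c : V → ℕ}
    (h : LidN G c) : LidN G (fun x => ι (c x)) := by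
  refine ⟨fun u v hadj he => h.1 hadj (hι he), fun u v hadj hN he => ?_⟩
  exact h.2 hadj hN ((image_eq_iff_inj hι c _ _).mp he)

lemma starP_comp {G : SimpleGraph V} {ι : ℕ → ℕ} (hι : Function.Injective ι) {c : V → ℕ}
    (h : StarP G c) : StarP G (fun x => ι (c x)) := by
  intro v hv
  exact h v ((image_eq_iff_inj hι c _ _).mp hv)

lemma closedNbhd'_restrict {G : SimpleGraph V} {S : Set V} (u : ↥S)
    (h : closedNbhd' G ↑u = Set.univ) : closedNbhd' (G.induce S) u = Set.univ := by
  ext x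
  simp only [Set.mem_univ, iff_true]
  have hxm : (x : V) ∈ closedNbhd' G ↑u := h ▸ Set.mem_univ _
  rcases mem_closedNbhd'.mp hxm with he | ha
  · exact mem_closedNbhd'.mpr (Or.inl (Subtype.ext he))
  · exact mem_closedNbhd'.mpr (Or.inr ha)

lemma closedNbhd'_union {G : SimpleGraph V} {S : Set V}
    (hnone : ∀ u ∈ S, ∀ w ∈ Sᶜ, ¬ G.Adj u w) (u : ↥S) :
    closedNbhd' G ↑u = Subtype.val '' closedNbhd' (G.induce S) u := by
  ext x
  constructor
  · intro hx
    rcases mem_closedNbhd'.mp hx with he | ha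
    · exact ⟨u, mem_closedNbhd'.mpr (Or.inl rfl), he.symm⟩
    · have hxS : x ∈ S := by
        by_contra hxc
        exact hnone ↑u u.2 x hxc ha
      exact ⟨⟨x, hxS⟩, mem_closedNbhd'.mpr (Or.inr ha), rfl⟩
  · rintro ⟨y, hy, rfl⟩
    rcases mem_closedNbhd'.mp hy with he | ha
    · exact mem_closedNbhd'.mpr (Or.inl (congrArg _ he))
    · exact mem_closedNbhd'.mpr (Or.inr ha)

lemma closedNbhd'_join {G : SimpleGraph V} {S : Set V}
    (hall : ∀ u ∈ S, ∀ w ∈ Sᶜ, G.Adj u w) (u : ↥S) :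
    closedNbhd' G ↑u = Subtype.val '' closedNbhd' (G.induce S) u ∪ Sᶜ := by
  ext x
  constructor
  · intro hx
    rcases mem_closedNbhd'.mp hx with he | ha
    · exact Or.inl ⟨u, mem_closedNbhd'.mpr (Or.inl rfl), he.symm⟩
    · by_cases hxS : x ∈ S
      · exact Or.inl ⟨⟨x, hxS⟩, mem_closedNbhd'.mpr (Or.inr ha), rfl⟩
      · exact Or.inr hxS
  · rintro (⟨y, hy, rfl⟩ | hx)
    · rcases mem_closedNbhd'.mp hy with he | ha
      · exact mem_closedNbhd'.mpr (Or.inl (congrArg _ he))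
      · exact mem_closedNbhd'.mpr (Or.inr ha)
    · exact mem_closedNbhd'.mpr (Or.inr (hall ↑u u.2 x hx))

lemma closedNbhd'_join_univ {G : SimpleGraph V} {S : Set V}
    (hall : ∀ u ∈ S, ∀ w ∈ Sᶜ, G.Adj u w) (u : ↥S)
    (h : closedNbhd' (G.induce S) u = Set.univ) : closedNbhd' G ↑u = Set.univ := by
  rw [closedNbhd'_join hall u, h]
  have : Subtype.val '' (Set.univ : Set ↥S) = S := Subtype.coe_image_univ S
  rw [this]
  exact Set.union_compl_self S

noncomputable def pieceC {S : Set V} (c1 : ↥S → ℕ) (c2 : ↥Sᶜ → ℕ) : V → ℕ :=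
  fun x => @dite _ (x ∈ S) (Classical.propDecidable _) (fun h => c1 ⟨x, h⟩) (fun h => c2 ⟨x, h⟩)

lemma pieceC_left {S : Set V} (c1 : ↥S → ℕ) (c2 : ↥Sᶜ → ℕ) (u : ↥S) :
    pieceC c1 c2 ↑u = c1 u := by
  unfold pieceC
  exact dif_pos u.2

lemma pieceC_right {S : Set V} (c1 : ↥S → ℕ) (c2 : ↥Sᶜ → ℕ) (u : ↥Sᶜ) :
    pieceC c1 c2 ↑u = c2 u := by
  unfold pieceC
  exact dif_neg u.2

lemma pieceC_image_left {S : Set V} (c1 : ↥S → ℕ) (c2 : ↥Sᶜ → ℕ) (T : Set ↥S) :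
    pieceC c1 c2 '' (Subtype.val '' T) = c1 '' T := by
  rw [Set.image_image]
  exact Set.image_congr (fun t _ => pieceC_left c1 c2 t)

lemma pieceC_image_right {S : Set V} (c1 : ↥S → ℕ) (c2 : ↥Sᶜ → ℕ) (T : Set ↥Sᶜ) :
    pieceC c1 c2 '' (Subtype.val '' T) = c2 '' T := by
  rw [Set.image_image]
  exact Set.image_congr (fun t _ => pieceC_right c1 c2 t)

lemma univ_eq_union_val (S : Set V) :
    (Set.univ : Set V) =
      Subtype.val '' (Set.univ : Set ↥S) ∪ Subtype.val '' (Set.univ : Set ↥Sᶜ) := by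
  rw [Subtype.coe_image_univ, Subtype.coe_image_univ]
  exact (Set.union_compl_self S).symm

lemma pieceC_image_univ {S : Set V} (c1 : ↥S → ℕ) (c2 : ↥Sᶜ → ℕ) :
    pieceC c1 c2 '' Set.univ = c1 '' Set.univ ∪ c2 '' Set.univ := by
  rw [univ_eq_union_val S, Set.image_union, pieceC_image_left, pieceC_image_right]

lemma swap_lt {i j m x : ℕ} (hi : i < m) (hj : j < m) (hx : x < m) :
    Equiv.swap i j x < m := by
  rw [Equiv.swap_apply_def]
  split_ifs <;> assumption

lemma disj_union_eq {A1 B1 A2 B2 : Set ℕ} {s : ℕ}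
    (ha1 : ∀ x ∈ A1, x < s) (ha2 : ∀ x ∈ A2, x < s)
    (hb1 : ∀ x ∈ B1, s ≤ x) (hb2 : ∀ x ∈ B2, s ≤ x)
    (h : A1 ∪ B1 = A2 ∪ B2) : A1 = A2 ∧ B1 = B2 := by
  constructor <;> ext x <;> constructor <;> intro hx
  · have hx' : x ∈ A2 ∪ B2 := by rw [← h]; exact Or.inl hx
    rcases hx' with h2 | h2
    · exact h2
    · exact absurd (hb2 x h2) (Nat.not_le.mpr (ha1 x hx))
  · have hx' : x ∈ A1 ∪ B1 := by rw [h]; exact Or.inl hx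
    rcases hx' with h2 | h2
    · exact h2
    · exact absurd (hb1 x h2) (Nat.not_le.mpr (ha2 x hx))
  · have hx' : x ∈ A2 ∪ B2 := by rw [← h]; exact Or.inr hx
    rcases hx' with h2 | h2
    · exact absurd (hb1 x hx) (Nat.not_le.mpr (ha2 x h2))
    · exact h2
  · have hx' : x ∈ A1 ∪ B1 := by rw [h]; exact Or.inr hx
    rcases hx' with h2 | h2
    · exact absurd (hb2 x hx) (Nat.not_le.mpr (ha1 x h2))
    · exact h2

lemma no_univ_union {G : SimpleGraph V} {S : Set V}
    (hSne : S.Nonempty) (hScne : Sᶜ.Nonempty)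
    (hnone : ∀ u ∈ S, ∀ w ∈ Sᶜ, ¬ G.Adj u w) : ¬ HasUniv G := by
  rintro ⟨v, hv⟩
  by_cases hvS : v ∈ S
  · have hw : hScne.choose ∈ closedNbhd' G v := hv ▸ Set.mem_univ _
    rcases mem_closedNbhd'.mp hw with he | ha
    · exact hScne.choose_spec (he ▸ hvS)
    · exact hnone v hvS _ hScne.choose_spec ha
  · have hw : hSne.choose ∈ closedNbhd' G v := hv ▸ Set.mem_univ _
    rcases mem_closedNbhd'.mp hw with he | ha
    · exact hvS (he ▸ hSne.choose_spec)
    · exact hnone _ hSne.choose_spec v hvS ha.symm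

lemma hasUniv_side {G : SimpleGraph V} (S : Set V) (h : HasUniv G) :
    HasUniv (G.induce S) ∨ HasUniv (G.induce Sᶜ) := by
  obtain ⟨v, hv⟩ := h
  by_cases hvS : v ∈ S
  · exact Or.inl ⟨⟨v, hvS⟩, closedNbhd'_restrict _ hv⟩
  · exact Or.inr ⟨⟨v, hvS⟩, closedNbhd'_restrict _ hv⟩

lemma hnone_flip {G : SimpleGraph V} {S : Set V}
    (hnone : ∀ u ∈ S, ∀ w ∈ Sᶜ, ¬ G.Adj u w) :
    ∀ u ∈ Sᶜ, ∀ w ∈ Sᶜᶜ, ¬ G.Adj u w := by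
  intro u hu w hw hadj
  rw [compl_compl] at hw
  exact hnone w hw u hu hadj.symm

lemma hall_flip {G : SimpleGraph V} {S : Set V}
    (hall : ∀ u ∈ S, ∀ w ∈ Sᶜ, G.Adj u w) :
    ∀ u ∈ Sᶜ, ∀ w ∈ Sᶜᶜ, G.Adj u w := by
  intro u hu w hw
  rw [compl_compl] at hw
  exact (hall w hw u hu).symm

lemma union_core {G : SimpleGraph V} {S : Set V}
    (hnone : ∀ u ∈ S, ∀ w ∈ Sᶜ, ¬ G.Adj u w)
    (c1 : ↥S → ℕ) (c2 : ↥Sᶜ → ℕ)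
    (hlid1 : LidN (G.induce S) c1) (hlid2 : LidN (G.induce Sᶜ) c2) :
    LidN G (pieceC c1 c2) ∧
    (∀ u' : ↥S, pieceC c1 c2 '' closedNbhd' G ↑u' = c1 '' closedNbhd' (G.induce S) u') ∧
    (∀ v' : ↥Sᶜ, pieceC c1 c2 '' closedNbhd' G ↑v' = c2 '' closedNbhd' (G.induce Sᶜ) v') := by
  have himg1 : ∀ u' : ↥S, pieceC c1 c2 '' closedNbhd' G ↑u' =
      c1 '' closedNbhd' (G.induce S) u' := by
    intro u'
    rw [closedNbhd'_union hnone u', pieceC_image_left]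
  have himg2 : ∀ v' : ↥Sᶜ, pieceC c1 c2 '' closedNbhd' G ↑v' =
      c2 '' closedNbhd' (G.induce Sᶜ) v' := by
    intro v'
    rw [closedNbhd'_union (hnone_flip hnone) v', pieceC_image_right]
  refine ⟨⟨?_, ?_⟩, himg1, himg2⟩
  · intro u v hadj he
    by_cases hu : u ∈ S <;> by_cases hv : v ∈ S
    · have e1 : pieceC c1 c2 u = c1 ⟨u, hu⟩ := pieceC_left c1 c2 ⟨u, hu⟩
      have e2 : pieceC c1 c2 v = c1 ⟨v, hv⟩ := pieceC_left c1 c2 ⟨v, hv⟩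
      exact hlid1.1 (show (G.induce S).Adj ⟨u, hu⟩ ⟨v, hv⟩ from hadj) (by rw [← e1, ← e2, he])
    · exact hnone u hu v hv hadj
    · exact hnone v hv u hu hadj.symm
    · have e1 : pieceC c1 c2 u = c2 ⟨u, hu⟩ := pieceC_right c1 c2 ⟨u, hu⟩
      have e2 : pieceC c1 c2 v = c2 ⟨v, hv⟩ := pieceC_right c1 c2 ⟨v, hv⟩
      exact hlid2.1 (show (G.induce Sᶜ).Adj ⟨u, hu⟩ ⟨v, hv⟩ from hadj) (by rw [← e1, ← e2, he])
  · intro u v hadj hN he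
    by_cases hu : u ∈ S <;> by_cases hv : v ∈ S
    · have hN' : closedNbhd' (G.induce S) ⟨u, hu⟩ ≠ closedNbhd' (G.induce S) ⟨v, hv⟩ := by
        intro hh
        exact hN (by rw [show closedNbhd' G u = closedNbhd' G ↑(⟨u, hu⟩ : ↥S) from rfl,
          closedNbhd'_union hnone ⟨u, hu⟩, closedNbhd'_union hnone ⟨v, hv⟩, hh])
      refine hlid1.2 (show (G.induce S).Adj ⟨u, hu⟩ ⟨v, hv⟩ from hadj) hN' ?_
      rw [← himg1 ⟨u, hu⟩, ← himg1 ⟨v, hv⟩]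
      exact he
    · exact hnone u hu v hv hadj
    · exact hnone v hv u hu hadj.symm
    · have hN' : closedNbhd' (G.induce Sᶜ) ⟨u, hu⟩ ≠ closedNbhd' (G.induce Sᶜ) ⟨v, hv⟩ := by
        intro hh
        exact hN (by rw [show closedNbhd' G u = closedNbhd' G ↑(⟨u, hu⟩ : ↥Sᶜ) from rfl,
          closedNbhd'_union (hnone_flip hnone) ⟨u, hu⟩,
          closedNbhd'_union (hnone_flip hnone) ⟨v, hv⟩, hh])
      refine hlid2.2 (show (G.induce Sᶜ).Adj ⟨u, hu⟩ ⟨v, hv⟩ from hadj) hN' ?_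
      rw [← himg2 ⟨u, hu⟩, ← himg2 ⟨v, hv⟩]
      exact he

lemma join_core {G : SimpleGraph V} {S : Set V}
    (hall : ∀ u ∈ S, ∀ w ∈ Sᶜ, G.Adj u w)
    (c1 : ↥S → ℕ) (c2 : ↥Sᶜ → ℕ)
    (hlid1 : LidN (G.induce S) c1) (hlid2 : LidN (G.induce Sᶜ) c2)
    (hstar1 : StarP (G.induce S) c1)
    (s : ℕ) (h1lt : ∀ x, c1 x < s)
    (hstar2 : StarP (G.induce Sᶜ) c2 ∨ ¬ HasUniv (G.induce S)) :
    ∃ c : V → ℕ, LidN G c ∧ (StarP (G.induce Sᶜ) c2 → StarP G c) ∧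
      (∀ u : ↥S, c ↑u = c1 u) ∧ (∀ u : ↥Sᶜ, c ↑u = s + c2 u) := by
  have hadd_inj : Function.Injective (fun n : ℕ => s + n) := fun x y h => by simpa using h
  have hlid2' : LidN (G.induce Sᶜ) (fun x => s + c2 x) := lidN_comp hadd_inj hlid2
  have himg1 : ∀ u' : ↥S, pieceC c1 (fun x => s + c2 x) '' closedNbhd' G ↑u' =
      c1 '' closedNbhd' (G.induce S) u' ∪ (fun x => s + c2 x) '' Set.univ := by
    intro u'
    have hSc : Subtype.val '' (Set.univ : Set ↥Sᶜ) = Sᶜ := Subtype.coe_image_univ _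
    have h2 : pieceC c1 (fun x => s + c2 x) '' Sᶜ = (fun x => s + c2 x) '' Set.univ :=
      (congrArg (fun T => pieceC c1 (fun x => s + c2 x) '' T) hSc.symm).trans
        (pieceC_image_right c1 _ Set.univ)
    rw [closedNbhd'_join hall u', Set.image_union, pieceC_image_left, h2]
  have himg2 : ∀ v' : ↥Sᶜ, pieceC c1 (fun x => s + c2 x) '' closedNbhd' G ↑v' =
      c1 '' Set.univ ∪ (fun x => s + c2 x) '' closedNbhd' (G.induce Sᶜ) v' := by
    intro v'
    have hS : Subtype.val '' (Set.univ : Set ↥S) = S := Subtype.coe_image_univ _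
    have h2 : pieceC c1 (fun x => s + c2 x) '' S = c1 '' Set.univ :=
      (congrArg (fun T => pieceC c1 (fun x => s + c2 x) '' T) hS.symm).trans
        (pieceC_image_left c1 _ Set.univ)
    rw [closedNbhd'_join (hall_flip hall) v', compl_compl, Set.image_union,
      pieceC_image_right, h2, Set.union_comm]
  have himgU : pieceC c1 (fun x => s + c2 x) '' Set.univ =
      c1 '' Set.univ ∪ (fun x => s + c2 x) '' Set.univ := pieceC_image_univ _ _
  have hlo : ∀ (T : Set ↥S), ∀ x ∈ c1 '' T, x < s := by
    rintro T x ⟨y, _, rfl⟩; exact h1lt y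
  have hhi : ∀ (T : Set ↥Sᶜ), ∀ x ∈ (fun x => s + c2 x) '' T, s ≤ x := by
    rintro T x ⟨y, _, rfl⟩; exact Nat.le_add_right s (c2 y)
  have hNG1 : ∀ u' v' : ↥S, closedNbhd' (G.induce S) u' = closedNbhd' (G.induce S) v' →
      closedNbhd' G ↑u' = closedNbhd' G ↑v' := by
    intro u' v' hh
    rw [closedNbhd'_join hall u', closedNbhd'_join hall v', hh]
  have hNG2 : ∀ u' v' : ↥Sᶜ, closedNbhd' (G.induce Sᶜ) u' = closedNbhd' (G.induce Sᶜ) v' →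
      closedNbhd' G ↑u' = closedNbhd' G ↑v' := by
    intro u' v' hh
    rw [closedNbhd'_join (hall_flip hall) u', closedNbhd'_join (hall_flip hall) v', hh]
  -- the cross-pair analysis
  have hcross : ∀ (u' : ↥S) (v' : ↥Sᶜ),
      pieceC c1 (fun x => s + c2 x) '' closedNbhd' G ↑u' =
        pieceC c1 (fun x => s + c2 x) '' closedNbhd' G ↑v' →
      closedNbhd' G ↑u' = closedNbhd' G ↑v' := by
    intro u' v' he
    rw [himg1 u', himg2 v'] at he
    obtain ⟨E1, E2⟩ := disj_union_eq (hlo _) (hlo _) (hhi _) (hhi _) he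
    rcases hstar2 with star2 | hnU1
    · have hN1 : closedNbhd' (G.induce S) u' = Set.univ := hstar1 u' E1
      have hN2 : closedNbhd' (G.induce Sᶜ) v' = Set.univ :=
        star2 v' ((image_eq_iff_inj hadd_inj c2 _ _).mp E2.symm)
      rw [closedNbhd'_join_univ hall u' hN1, closedNbhd'_join_univ (hall_flip hall) v' hN2]
    · exact absurd ⟨u', hstar1 u' E1⟩ hnU1
  refine ⟨pieceC c1 (fun x => s + c2 x), ⟨?_, ?_⟩, ?_, fun u => pieceC_left c1 _ u,
    fun u => pieceC_right c1 _ u⟩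
  · -- proper coloring
    intro u v hadj he
    by_cases hu : u ∈ S <;> by_cases hv : v ∈ S
    · have e1 : pieceC c1 (fun x => s + c2 x) u = c1 ⟨u, hu⟩ := pieceC_left c1 _ ⟨u, hu⟩
      have e2 : pieceC c1 (fun x => s + c2 x) v = c1 ⟨v, hv⟩ := pieceC_left c1 _ ⟨v, hv⟩
      exact hlid1.1 (show (G.induce S).Adj ⟨u, hu⟩ ⟨v, hv⟩ from hadj) (by rw [← e1, ← e2, he])
    · have e1 : pieceC c1 (fun x => s + c2 x) u = c1 ⟨u, hu⟩ := pieceC_left c1 _ ⟨u, hu⟩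
      have e2 : pieceC c1 (fun x => s + c2 x) v = s + c2 ⟨v, hv⟩ := pieceC_right c1 _ ⟨v, hv⟩
      have := h1lt ⟨u, hu⟩
      omega
    · have e1 : pieceC c1 (fun x => s + c2 x) u = s + c2 ⟨u, hu⟩ := pieceC_right c1 _ ⟨u, hu⟩
      have e2 : pieceC c1 (fun x => s + c2 x) v = c1 ⟨v, hv⟩ := pieceC_left c1 _ ⟨v, hv⟩
      have := h1lt ⟨v, hv⟩
      omega
    · have e1 : pieceC c1 (fun x => s + c2 x) u = s + c2 ⟨u, hu⟩ := pieceC_right c1 _ ⟨u, hu⟩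
      have e2 : pieceC c1 (fun x => s + c2 x) v = s + c2 ⟨v, hv⟩ := pieceC_right c1 _ ⟨v, hv⟩
      exact hlid2'.1 (show (G.induce Sᶜ).Adj ⟨u, hu⟩ ⟨v, hv⟩ from hadj)
        (show s + c2 ⟨u, hu⟩ = s + c2 ⟨v, hv⟩ by rw [← e1, ← e2, he])
  · -- lid property
    intro u v hadj hN he
    by_cases hu : u ∈ S <;> by_cases hv : v ∈ S
    · have he' := he
      rw [show closedNbhd' G u = closedNbhd' G ↑(⟨u, hu⟩ : ↥S) from rfl,
        show closedNbhd' G v = closedNbhd' G ↑(⟨v, hv⟩ : ↥S) from rfl,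
        himg1 ⟨u, hu⟩, himg1 ⟨v, hv⟩] at he'
      obtain ⟨E1, _⟩ := disj_union_eq (hlo _) (hlo _) (hhi _) (hhi _) he'
      have hN' : closedNbhd' (G.induce S) ⟨u, hu⟩ ≠ closedNbhd' (G.induce S) ⟨v, hv⟩ :=
        fun hh => hN (hNG1 _ _ hh)
      exact hlid1.2 (show (G.induce S).Adj ⟨u, hu⟩ ⟨v, hv⟩ from hadj) hN' E1
    · exact hN (hcross ⟨u, hu⟩ ⟨v, hv⟩ he)
    · exact hN ((hcross ⟨v, hv⟩ ⟨u, hu⟩ he.symm).symm)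
    · have he' := he
      rw [show closedNbhd' G u = closedNbhd' G ↑(⟨u, hu⟩ : ↥Sᶜ) from rfl,
        show closedNbhd' G v = closedNbhd' G ↑(⟨v, hv⟩ : ↥Sᶜ) from rfl,
        himg2 ⟨u, hu⟩, himg2 ⟨v, hv⟩] at he'
      obtain ⟨_, E2⟩ := disj_union_eq (hlo _) (hlo _) (hhi _) (hhi _) he'
      have hN' : closedNbhd' (G.induce Sᶜ) ⟨u, hu⟩ ≠ closedNbhd' (G.induce Sᶜ) ⟨v, hv⟩ :=
        fun hh => hN (hNG2 _ _ hh)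
      exact hlid2'.2 (show (G.induce Sᶜ).Adj ⟨u, hu⟩ ⟨v, hv⟩ from hadj) hN' E2
  · -- star property
    intro star2 v hv
    by_cases hvS : v ∈ S
    · have hv' := hv
      rw [show closedNbhd' G v = closedNbhd' G ↑(⟨v, hvS⟩ : ↥S) from rfl,
        himg1 ⟨v, hvS⟩, himgU] at hv'
      obtain ⟨E1, _⟩ := disj_union_eq (hlo _) (hlo _) (hhi _) (hhi _) hv'
      exact closedNbhd'_join_univ hall ⟨v, hvS⟩ (hstar1 _ E1)
    · have hv' := hv
      rw [show closedNbhd' G v = closedNbhd' G ↑(⟨v, hvS⟩ : ↥Sᶜ) from rfl,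
        himg2 ⟨v, hvS⟩, himgU] at hv'
      obtain ⟨_, E2⟩ := disj_union_eq (hlo _) (hlo _) (hhi _) (hhi _) hv'
      exact closedNbhd'_join_univ (hall_flip hall) ⟨v, hvS⟩
        (star2 _ ((image_eq_iff_inj hadd_inj c2 _ _).mp E2))

lemma good_union_core [Fintype V] {G : SimpleGraph V} {S : Set V}
    (hSne : S.Nonempty) (hScne : Sᶜ.Nonempty)
    (hnone : ∀ u ∈ S, ∀ w ∈ Sᶜ, ¬ G.Adj u w)
    (c1 : ↥S → ℕ) (c2 : ↥Sᶜ → ℕ)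
    (hlid1 : LidN (G.induce S) c1) (hstar1 : StarP (G.induce S) c1)
    (hb1 : ∀ x, c1 x < 2 * (G.induce S).cliqueNum)
    (hu1 : HasUniv (G.induce S) → ∀ x, c1 x < 2 * (G.induce S).cliqueNum - 1)
    (hlid2 : LidN (G.induce Sᶜ) c2) (hstar2 : StarP (G.induce Sᶜ) c2)
    (e2 : Equiv.Perm ℕ) (a : ℕ) (haA : a ∈ c1 '' Set.univ)
    (hP1 : ∀ x, e2 (c2 x) < 2 * G.cliqueNum)
    (hP2 : HasUniv (G.induce S) → ∃ x, e2 (c2 x) = 2 * G.cliqueNum - 1)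
    (hP3 : HasUniv (G.induce Sᶜ) → ∀ x, e2 (c2 x) ≠ a) :
    GoodC G := by
  haveI : Nonempty V := ⟨hSne.choose⟩
  haveI : Fintype ↥S := Fintype.ofFinite _
  have hω1 : (G.induce S).cliqueNum ≤ G.cliqueNum := _root_.cliqueNum_induce_le S
  have hω : 1 ≤ G.cliqueNum := one_le_cliqueNum
  have hlid2' : LidN (G.induce Sᶜ) (fun x => e2 (c2 x)) := lidN_comp e2.injective hlid2
  have hstar2' : StarP (G.induce Sᶜ) (fun x => e2 (c2 x)) := starP_comp e2.injective hstar2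
  obtain ⟨hlid, himg1, himg2⟩ := union_core hnone c1 (fun x => e2 (c2 x)) hlid1 hlid2'
  have himgU := pieceC_image_univ c1 (fun x => e2 (c2 x))
  refine ⟨pieceC c1 (fun x => e2 (c2 x)), hlid, ?_, ?_, fun h =>
    absurd h (no_univ_union hSne hScne hnone)⟩
  · -- star property: derive a contradiction in every case
    intro v hv
    exfalso
    by_cases hvS : v ∈ S
    · have himgv : pieceC c1 (fun x => e2 (c2 x)) '' closedNbhd' G v =
          c1 '' closedNbhd' (G.induce S) ⟨v, hvS⟩ := himg1 ⟨v, hvS⟩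
      rw [himgv, himgU] at hv
      by_cases hU1 : HasUniv (G.induce S)
      · obtain ⟨x, hx⟩ := hP2 hU1
        have hK : 2 * G.cliqueNum - 1 ∈ c1 '' Set.univ ∪ (fun x => e2 (c2 x)) '' Set.univ :=
          Or.inr ⟨x, trivial, hx⟩
        rw [← hv] at hK
        obtain ⟨y, _, hy⟩ := hK
        have := hu1 hU1 y
        omega
      · have hNne : closedNbhd' (G.induce S) ⟨v, hvS⟩ ≠ Set.univ :=
          fun hh => hU1 ⟨⟨v, hvS⟩, hh⟩
        have hne : c1 '' closedNbhd' (G.induce S) ⟨v, hvS⟩ ≠ c1 '' Set.univ :=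
          fun hh => hNne (hstar1 _ hh)
        obtain ⟨z, hz1, hz2⟩ := Set.exists_of_ssubset
          (Set.ssubset_iff_subset_ne.mpr ⟨Set.image_mono (f := c1) (Set.subset_univ _), hne⟩)
        have hz : z ∈ c1 '' closedNbhd' (G.induce S) ⟨v, hvS⟩ := by
          rw [hv]; exact Or.inl hz1
        exact hz2 hz
    · have himgv : pieceC c1 (fun x => e2 (c2 x)) '' closedNbhd' G v =
          (fun x => e2 (c2 x)) '' closedNbhd' (G.induce Sᶜ) ⟨v, hvS⟩ := himg2 ⟨v, hvS⟩
      rw [himgv, himgU] at hv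
      by_cases hU2 : HasUniv (G.induce Sᶜ)
      · have haU : a ∈ c1 '' Set.univ ∪ (fun x => e2 (c2 x)) '' Set.univ := Or.inl haA
        rw [← hv] at haU
        obtain ⟨y, _, hy⟩ := haU
        exact hP3 hU2 y hy
      · have hNne : closedNbhd' (G.induce Sᶜ) ⟨v, hvS⟩ ≠ Set.univ :=
          fun hh => hU2 ⟨⟨v, hvS⟩, hh⟩
        have hne : (fun x => e2 (c2 x)) '' closedNbhd' (G.induce Sᶜ) ⟨v, hvS⟩ ≠
            (fun x => e2 (c2 x)) '' Set.univ :=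
          fun hh => hNne (hstar2' _ hh)
        obtain ⟨z, hz1, hz2⟩ := Set.exists_of_ssubset
          (Set.ssubset_iff_subset_ne.mpr ⟨Set.image_mono (Set.subset_univ _), hne⟩)
        have hz : z ∈ (fun x => e2 (c2 x)) '' closedNbhd' (G.induce Sᶜ) ⟨v, hvS⟩ := by
          rw [hv]; exact Or.inr hz1
        exact hz2 hz
  · -- bound
    intro v
    by_cases hvS : v ∈ S
    · have e : pieceC c1 (fun x => e2 (c2 x)) v = c1 ⟨v, hvS⟩ := pieceC_left _ _ ⟨v, hvS⟩
      have := hb1 ⟨v, hvS⟩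
      omega
    · have e : pieceC c1 (fun x => e2 (c2 x)) v = e2 (c2 ⟨v, hvS⟩) := pieceC_right _ _ ⟨v, hvS⟩
      have := hP1 ⟨v, hvS⟩
      omega

lemma good_union [Fintype V] {G : SimpleGraph V} {S : Set V}
    (hSne : S.Nonempty) (hScne : Sᶜ.Nonempty)
    (hnone : ∀ u ∈ S, ∀ w ∈ Sᶜ, ¬ G.Adj u w)
    (hg1 : GoodC (G.induce S)) (hg2 : GoodC (G.induce Sᶜ)) : GoodC G := by
  classical
  obtain ⟨c1, hlid1, hstar1, hb1, hu1⟩ := hg1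
  obtain ⟨c2, hlid2, hstar2, hb2, hu2⟩ := hg2
  obtain ⟨x1, hx1⟩ := hSne
  obtain ⟨x2, hx2⟩ := hScne
  haveI : Nonempty V := ⟨x1⟩
  haveI : Fintype ↥S := Fintype.ofFinite _
  haveI : Fintype ↥Sᶜ := Fintype.ofFinite _
  have hω1 : (G.induce S).cliqueNum ≤ G.cliqueNum := _root_.cliqueNum_induce_le S
  have hω2 : (G.induce Sᶜ).cliqueNum ≤ G.cliqueNum := _root_.cliqueNum_induce_le Sᶜ
  have hω : 1 ≤ G.cliqueNum := one_le_cliqueNum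
  obtain ⟨K, hK⟩ : ∃ K, K = 2 * G.cliqueNum - 1 := ⟨_, rfl⟩
  have hKω : K < 2 * G.cliqueNum := by omega
  obtain ⟨a, haA, ha2, ha1K⟩ : ∃ a, a ∈ c1 '' Set.univ ∧ a < 2 * G.cliqueNum ∧
      (HasUniv (G.induce S) → a < K) :=
    ⟨c1 ⟨x1, hx1⟩, ⟨_, trivial, rfl⟩, by have := hb1 ⟨x1, hx1⟩; omega,
      fun h => by have := hu1 h ⟨x1, hx1⟩; omega⟩
  obtain ⟨b, y2, hy2, hb2ω⟩ : ∃ b, ∃ y : ↥Sᶜ, c2 y = b ∧ b < 2 * G.cliqueNum :=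
    ⟨_, ⟨x2, hx2⟩, rfl, by have := hb2 ⟨x2, hx2⟩; omega⟩
  have hc2K : HasUniv (G.induce Sᶜ) → ∀ x, c2 x ≠ K := by
    intro hU2 x
    have := hu2 hU2 x
    omega
  by_cases hr : a ∈ Set.range (fun x => Equiv.swap b K (c2 x))
  · refine good_union_core ⟨x1, hx1⟩ ⟨x2, hx2⟩ hnone c1 c2 hlid1 hstar1 hb1 hu1 hlid2 hstar2
      ((Equiv.swap b K).trans (Equiv.swap a b)) a haA ?_ ?_ ?_
    · intro x
      simp only [Equiv.trans_apply]
      exact swap_lt ha2 hb2ω (swap_lt hb2ω hKω (by have := hb2 x; omega))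
    · intro hU1
      have haK : a ≠ K := fun h => absurd h (Nat.ne_of_lt (ha1K hU1))
      by_cases hbK : b = K
      · obtain ⟨x, hx⟩ := hr
        refine ⟨x, ?_⟩
        simp only [Equiv.trans_apply]
        simp only at hx
        rw [hx, Equiv.swap_apply_left, hbK, hK]
      · refine ⟨y2, ?_⟩
        simp only [Equiv.trans_apply]
        rw [hy2, Equiv.swap_apply_left,
          Equiv.swap_apply_of_ne_of_ne (Ne.symm haK) (Ne.symm hbK), hK]
    · intro hU2 x hEq
      simp only [Equiv.trans_apply] at hEq
      have hcxK : c2 x ≠ K := hc2K hU2 x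
      have hyb : Equiv.swap b K (c2 x) ≠ b := by
        by_cases hcb : c2 x = b
        · rw [hcb, Equiv.swap_apply_left]
          intro h
          exact hcxK (hcb.trans h.symm)
        · rw [Equiv.swap_apply_of_ne_of_ne hcb hcxK]
          exact hcb
      have := congrArg (Equiv.swap a b) hEq
      rw [Equiv.swap_apply_self, Equiv.swap_apply_left] at this
      exact hyb this
  · refine good_union_core ⟨x1, hx1⟩ ⟨x2, hx2⟩ hnone c1 c2 hlid1 hstar1 hb1 hu1 hlid2 hstar2
      (Equiv.swap b K) a haA ?_ ?_ ?_
    · intro x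
      exact swap_lt hb2ω hKω (by have := hb2 x; omega)
    · intro _
      refine ⟨y2, ?_⟩
      rw [hy2, Equiv.swap_apply_left, hK]
    · intro _ x hEq
      exact hr ⟨x, hEq⟩

lemma ok_union [Fintype V] {G : SimpleGraph V} {S : Set V}
    (hnone : ∀ u ∈ S, ∀ w ∈ Sᶜ, ¬ G.Adj u w)
    (ho1 : OkC (G.induce S)) (ho2 : OkC (G.induce Sᶜ)) : OkC G := by
  obtain ⟨c1, hlid1, hb1⟩ := ho1
  obtain ⟨c2, hlid2, hb2⟩ := ho2
  have hω1 : (G.induce S).cliqueNum ≤ G.cliqueNum := _root_.cliqueNum_induce_le S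
  have hω2 : (G.induce Sᶜ).cliqueNum ≤ G.cliqueNum := _root_.cliqueNum_induce_le Sᶜ
  obtain ⟨hlid, _, _⟩ := union_core hnone c1 c2 hlid1 hlid2
  refine ⟨pieceC c1 c2, hlid, ?_⟩
  intro v
  by_cases hvS : v ∈ S
  · have e : pieceC c1 c2 v = c1 ⟨v, hvS⟩ := pieceC_left _ _ ⟨v, hvS⟩
    have := hb1 ⟨v, hvS⟩
    omega
  · have e : pieceC c1 c2 v = c2 ⟨v, hvS⟩ := pieceC_right _ _ ⟨v, hvS⟩
    have := hb2 ⟨v, hvS⟩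
    omega

lemma good_join [Fintype V] {G : SimpleGraph V} {S : Set V}
    (hSne : S.Nonempty) (hScne : Sᶜ.Nonempty)
    (hall : ∀ u ∈ S, ∀ w ∈ Sᶜ, G.Adj u w)
    (hg1 : GoodC (G.induce S)) (hg2 : GoodC (G.induce Sᶜ)) : GoodC G := by
  classical
  obtain ⟨c1, hlid1, hstar1, hb1, hu1⟩ := hg1
  obtain ⟨c2, hlid2, hstar2, hb2, hu2⟩ := hg2
  haveI : Nonempty ↥S := hSne.to_subtype
  haveI : Nonempty ↥Sᶜ := hScne.to_subtype
  haveI : Fintype ↥S := Fintype.ofFinite _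
  haveI : Fintype ↥Sᶜ := Fintype.ofFinite _
  have hsum : (G.induce S).cliqueNum + (G.induce Sᶜ).cliqueNum ≤ G.cliqueNum :=
    add_cliqueNum_le_join hall
  have hω1 : 1 ≤ (G.induce S).cliqueNum := one_le_cliqueNum
  have hω2 : 1 ≤ (G.induce Sᶜ).cliqueNum := one_le_cliqueNum
  by_cases hU1 : HasUniv (G.induce S)
  · obtain ⟨c, hlid, hstarImp, hv1, hv2⟩ := join_core hall c1 c2 hlid1 hlid2 hstar1
      (2 * (G.induce S).cliqueNum - 1) (hu1 hU1) (Or.inl hstar2)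
    refine ⟨c, hlid, hstarImp hstar2, ?_, ?_⟩
    · intro v
      by_cases hvS : v ∈ S
      · have e : c v = c1 ⟨v, hvS⟩ := hv1 ⟨v, hvS⟩
        have := hb1 ⟨v, hvS⟩
        omega
      · have e : c v = 2 * (G.induce S).cliqueNum - 1 + c2 ⟨v, hvS⟩ := hv2 ⟨v, hvS⟩
        have := hb2 ⟨v, hvS⟩
        omega
    · intro _ v
      by_cases hvS : v ∈ S
      · have e : c v = c1 ⟨v, hvS⟩ := hv1 ⟨v, hvS⟩
        have := hu1 hU1 ⟨v, hvS⟩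
        omega
      · have e : c v = 2 * (G.induce S).cliqueNum - 1 + c2 ⟨v, hvS⟩ := hv2 ⟨v, hvS⟩
        have := hb2 ⟨v, hvS⟩
        omega
  · obtain ⟨c, hlid, hstarImp, hv1, hv2⟩ := join_core hall c1 c2 hlid1 hlid2 hstar1
      (2 * (G.induce S).cliqueNum) hb1 (Or.inl hstar2)
    refine ⟨c, hlid, hstarImp hstar2, ?_, ?_⟩
    · intro v
      by_cases hvS : v ∈ S
      · have e : c v = c1 ⟨v, hvS⟩ := hv1 ⟨v, hvS⟩
        have := hb1 ⟨v, hvS⟩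
        omega
      · have e : c v = 2 * (G.induce S).cliqueNum + c2 ⟨v, hvS⟩ := hv2 ⟨v, hvS⟩
        have := hb2 ⟨v, hvS⟩
        omega
    · intro hU v
      have hU2 : HasUniv (G.induce Sᶜ) := (hasUniv_side S hU).resolve_left hU1
      by_cases hvS : v ∈ S
      · have e : c v = c1 ⟨v, hvS⟩ := hv1 ⟨v, hvS⟩
        have := hb1 ⟨v, hvS⟩
        omega
      · have e : c v = 2 * (G.induce S).cliqueNum + c2 ⟨v, hvS⟩ := hv2 ⟨v, hvS⟩
        have := hu2 hU2 ⟨v, hvS⟩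
        omega

lemma ok_join [Fintype V] {G : SimpleGraph V} {S : Set V}
    (hSne : S.Nonempty) (hScne : Sᶜ.Nonempty)
    (hall : ∀ u ∈ S, ∀ w ∈ Sᶜ, G.Adj u w)
    (hg1 : GoodC (G.induce S)) (hg2 : GoodC (G.induce Sᶜ)) (ho2 : OkC (G.induce Sᶜ)) :
    OkC G := by
  classical
  obtain ⟨c1, hlid1, hstar1, hb1, hu1⟩ := hg1
  haveI : Nonempty ↥S := hSne.to_subtype
  haveI : Nonempty ↥Sᶜ := hScne.to_subtype
  haveI : Fintype ↥S := Fintype.ofFinite _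
  haveI : Fintype ↥Sᶜ := Fintype.ofFinite _
  have hsum : (G.induce S).cliqueNum + (G.induce Sᶜ).cliqueNum ≤ G.cliqueNum :=
    add_cliqueNum_le_join hall
  have hω1 : 1 ≤ (G.induce S).cliqueNum := one_le_cliqueNum
  have hω2 : 1 ≤ (G.induce Sᶜ).cliqueNum := one_le_cliqueNum
  by_cases hU1 : HasUniv (G.induce S)
  · obtain ⟨c2, hlid2, hstar2, hb2, hu2⟩ := hg2
    obtain ⟨c, hlid, _, hv1, hv2⟩ := join_core hall c1 c2 hlid1 hlid2 hstar1
      (2 * (G.induce S).cliqueNum - 1) (hu1 hU1) (Or.inl hstar2)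
    refine ⟨c, hlid, ?_⟩
    intro v
    by_cases hvS : v ∈ S
    · have e : c v = c1 ⟨v, hvS⟩ := hv1 ⟨v, hvS⟩
      have := hu1 hU1 ⟨v, hvS⟩
      omega
    · have e : c v = 2 * (G.induce S).cliqueNum - 1 + c2 ⟨v, hvS⟩ := hv2 ⟨v, hvS⟩
      have := hb2 ⟨v, hvS⟩
      omega
  · obtain ⟨c2, hlid2, hb2⟩ := ho2
    obtain ⟨c, hlid, _, hv1, hv2⟩ := join_core hall c1 c2 hlid1 hlid2 hstar1
      (2 * (G.induce S).cliqueNum) hb1 (Or.inr hU1)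
    refine ⟨c, hlid, ?_⟩
    intro v
    by_cases hvS : v ∈ S
    · have e : c v = c1 ⟨v, hvS⟩ := hv1 ⟨v, hvS⟩
      have := hb1 ⟨v, hvS⟩
      omega
    · have e : c v = 2 * (G.induce S).cliqueNum + c2 ⟨v, hvS⟩ := hv2 ⟨v, hvS⟩
      have := hb2 ⟨v, hvS⟩
      omega

lemma base_case [Fintype V] (G : SimpleGraph V) (h1 : Fintype.card V = 1) :
    GoodC G ∧ OkC G := by
  haveI : Nonempty V := Fintype.card_pos_iff.mp (by omega)
  haveI hsub : Subsingleton V := Fintype.card_le_one_iff_subsingleton.mp (by omega)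
  have hnoadj : ∀ {u v : V}, G.Adj u v → False := by
    intro u v hadj
    exact G.irrefl (Subsingleton.elim u v ▸ hadj)
  have hlid : LidN G (fun _ => 0) :=
    ⟨fun u v hadj => (hnoadj hadj).elim, fun u v hadj => (hnoadj hadj).elim⟩
  have hstar : StarP G (fun _ => 0) := by
    intro v _
    ext x
    simp only [Set.mem_univ, iff_true]
    exact mem_closedNbhd'.mpr (Or.inl (Subsingleton.elim x v))
  have hω : G.cliqueNum = 1 := by
    have hle : G.cliqueNum ≤ 1 := h1 ▸ cliqueNum_le_card
    have hge : 1 ≤ G.cliqueNum := one_le_cliqueNum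
    omega
  constructor
  · exact ⟨fun _ => 0, hlid, hstar, fun v => by show (0:ℕ) < 2 * G.cliqueNum; omega,
      fun _ v => by show (0:ℕ) < 2 * G.cliqueNum - 1; omega⟩
  · exact ⟨fun _ => 0, hlid, fun v => by show (0:ℕ) < 2 * G.cliqueNum - 1; omega⟩

lemma main_aux : ∀ n : ℕ, ∀ {V : Type u_1} [Fintype V] [Nonempty V] (G : SimpleGraph V),
    Fintype.card V = n → IsEmpty (SimpleGraph.pathGraph 4 ↪g G) → GoodC G ∧ OkC G := by
  intro n
  induction n using Nat.strong_induction_on with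
  | _ n IH =>
  intro V _ _ G hcard hP4
  classical
  by_cases h1 : Fintype.card V = 1
  · exact base_case G h1
  · have h2 : 2 ≤ Fintype.card V := by
      have : 1 ≤ Fintype.card V := Fintype.card_pos
      omega
    obtain ⟨S, hSne, hScne, hsplit⟩ := seinsche G hP4 h2
    haveI : Nonempty ↥S := hSne.to_subtype
    haveI : Nonempty ↥Sᶜ := hScne.to_subtype
    have hcS : Fintype.card ↥S < n := by
      rw [← hcard]
      exact Fintype.card_subtype_lt (x := hScne.choose) (by simpa using hScne.choose_spec)
    have hcSc : Fintype.card ↥Sᶜ < n := by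
      rw [← hcard]
      exact Fintype.card_subtype_lt (x := hSne.choose) (by simpa using hSne.choose_spec)
    obtain ⟨g1, o1⟩ := IH _ hcS (G.induce S) rfl (p4free_induce hP4 S)
    obtain ⟨g2, o2⟩ := IH _ hcSc (G.induce Sᶜ) rfl (p4free_induce hP4 Sᶜ)
    rcases hsplit with hnone | hall
    · exact ⟨good_union hSne hScne hnone g1 g2, ok_union hnone o1 o2⟩
    · exact ⟨good_join hSne hScne hall g1 g2, ok_join hSne hScne hall g1 g2 o2⟩

end Aux

/-- Every cograph `G` (a graph with no induced path on four vertices) admits a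
lid-coloring using at most `2 ω(G) - 1` colors. -/
theorem stmt13 {V : Type*} [Fintype V] (G : SimpleGraph V)
    (h : IsEmpty (SimpleGraph.pathGraph 4 ↪g G)) :
    LidColorable G (2 * G.cliqueNum - 1) := by
  classical
  cases isEmpty_or_nonempty V with
  | inl hE =>
    exact ⟨fun v => isEmptyElim v, fun u v hadj => isEmptyElim u,
      fun u v hadj _ => isEmptyElim u⟩
  | inr hne =>
    obtain ⟨-, c, ⟨hp, hl⟩, hb⟩ := main_aux (Fintype.card V) G rfl h
    refine ⟨fun v => ⟨c v, hb v⟩, ?_, ?_⟩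
    · intro u v hadj he
      exact hp hadj (congrArg Fin.val he)
    · intro u v hadj hN he
      have key : ∀ A : Set V,
          Fin.val '' ((fun v => (⟨c v, hb v⟩ : Fin (2 * G.cliqueNum - 1))) '' A) = c '' A := by
        intro A
        rw [← Set.image_comp]
        rfl
      refine hl hadj hN ?_
      show c '' closedNbhd G u = c '' closedNbhd G v
      rw [← key (closedNbhd G u), ← key (closedNbhd G v), he]
end

section
/- For every integer k ≥ 1, consider the graph built from a complete graph on vertices v₁, …, v_k by adding, for each 2 ≤ i ≤ k, a new vertex uᵢ whose neighborhood is exactly {vᵢ, v_{i+1}, …, v_k}. Every lid-coloring of this graph uses at least 2k − 1 colors, i.e. its lid-chromatic number is at least 2k − 1. -/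
open SimpleGraph

/-- The graph built from a complete graph on vertices `v₁, …, v_k` (here `Sum.inl` of
`Fin k`, 0-indexed) by adding, for each `2 ≤ i ≤ k`, a new vertex `uᵢ` (here `Sum.inr` of
`Fin (k-1)`, where index `j` stands for `u_{j+2}`) whose neighborhood is exactly
`{vᵢ, v_{i+1}, …, v_k}`. -/
def cographExample (k : ℕ) : SimpleGraph (Fin k ⊕ Fin (k - 1)) :=
  SimpleGraph.fromRel (fun a b =>
    match a, b with
    | Sum.inl _, Sum.inl _ => True
    | Sum.inr j, Sum.inl m => j.val + 1 ≤ m.val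
    | _, _ => False)

namespace Stmt14Aux

variable {k : ℕ}

lemma adj_inl {m m' : Fin k} (h : m ≠ m') :
    (cographExample k).Adj (Sum.inl m) (Sum.inl m') := by
  simp [cographExample, SimpleGraph.fromRel_adj, h]

lemma adj_inl_inr {j : Fin (k-1)} {m : Fin k} :
    (cographExample k).Adj (Sum.inl m) (Sum.inr j) ↔ j.val + 1 ≤ m.val := by
  simp [cographExample, SimpleGraph.fromRel_adj]

lemma mem_closed {x v : Fin k ⊕ Fin (k-1)} :
    x ∈ closedNbhd (cographExample k) v ↔ x = v ∨ (cographExample k).Adj v x := by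
  simp [closedNbhd]

lemma inl_mem_closed (m m' : Fin k) :
    Sum.inl m ∈ closedNbhd (cographExample k) (Sum.inl m') := by
  rcases eq_or_ne m m' with h | h
  · exact mem_closed.2 (Or.inl (by rw [h]))
  · exact mem_closed.2 (Or.inr (adj_inl (Ne.symm h)))

lemma inr_mem_closed_iff (j : Fin (k-1)) (m : Fin k) :
    Sum.inr j ∈ closedNbhd (cographExample k) (Sum.inl m) ↔ j.val + 1 ≤ m.val := by
  simp [mem_closed, adj_inl_inr]

lemma closed_succ (j : Fin (k-1)) :
    closedNbhd (cographExample k) (Sum.inl ⟨j.val + 1, by omega⟩) =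
      insert (Sum.inr j) (closedNbhd (cographExample k) (Sum.inl ⟨j.val, by omega⟩)) := by
  ext x
  rcases x with m | b
  · simp [inl_mem_closed]
  · simp only [Set.mem_insert_iff, inr_mem_closed_iff, Sum.inr.injEq]
    constructor
    · intro h
      rcases eq_or_ne b j with h' | h'
      · exact Or.inl h'
      · have := Fin.val_ne_of_ne h'
        exact Or.inr (by omega)
    · rintro (h | h)
      · subst h; omega
      · omega

variable {α : Type*} {c : Fin k ⊕ Fin (k - 1) → α}

lemma key (hc : IsLidColoring (cographExample k) c) (j : Fin (k-1)) :
    c (Sum.inr j) ∉ c '' closedNbhd (cographExample k) (Sum.inl ⟨j.val, by omega⟩) := by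
  intro hmem
  set m : Fin k := ⟨j.val, by omega⟩
  set m1 : Fin k := ⟨j.val + 1, by omega⟩
  have hne : m1 ≠ m := by simp [m, m1, Fin.ext_iff]
  have hadj : (cographExample k).Adj (Sum.inl m1) (Sum.inl m) := adj_inl hne
  have hN : closedNbhd (cographExample k) (Sum.inl m1) ≠
      closedNbhd (cographExample k) (Sum.inl m) := by
    intro h
    have h1 : Sum.inr j ∈ closedNbhd (cographExample k) (Sum.inl m1) := by
      rw [inr_mem_closed_iff]
    have h2 : Sum.inr j ∉ closedNbhd (cographExample k) (Sum.inl m) := by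
      rw [inr_mem_closed_iff]; simp [m]
    exact h2 (h ▸ h1)
  have := hc.2 hadj hN
  apply this
  rw [closed_succ j, Set.image_insert_eq, Set.insert_eq_self.2 hmem]

lemma inj (hc : IsLidColoring (cographExample k) c) : Function.Injective c := by
  intro a b hab
  by_contra hne
  rcases a with m | j <;> rcases b with m' | j'
  · exact hc.1 (adj_inl (fun h => hne (by rw [h]))) hab
  · exact key hc j' (⟨Sum.inl m, inl_mem_closed m _, hab⟩)
  · exact key hc j (⟨Sum.inl m', inl_mem_closed m' _, hab.symm⟩)
  · have hjj : j ≠ j' := fun h => hne (by rw [h])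
    rcases lt_or_gt_of_ne (Fin.val_ne_of_ne hjj) with h | h
    · exact key hc j' ⟨Sum.inr j, (inr_mem_closed_iff _ _).2 (by simp; omega), hab⟩
    · exact key hc j ⟨Sum.inr j', (inr_mem_closed_iff _ _).2 (by simp; omega), hab.symm⟩

end Stmt14Aux

/-- For every `k ≥ 1`, every lid-coloring of the graph `cographExample k` uses at least
`2k - 1` colors. -/
theorem stmt14 (k : ℕ) (hk : 1 ≤ k) {α : Type*} (c : Fin k ⊕ Fin (k - 1) → α)
    (hc : IsLidColoring (cographExample k) c) :
    2 * k - 1 ≤ (Set.range c).ncard := by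
  have hinj := Stmt14Aux.inj hc
  have : (Set.range c).ncard = Nat.card (Fin k ⊕ Fin (k - 1)) := by
    rw [← Set.image_univ, Set.ncard_image_of_injective _ hinj, Set.ncard_univ]
  rw [this]
  simp [Nat.card_sum]
  omega
end

section
/- If a simple graph G has maximum degree Δ, then χ_lid(G) ≤ Δ³ − Δ² + Δ + 1. -/
open SimpleGraph

/-- Auxiliary graph: vertices joined iff distinct and connected by a walk of length ≤ 3. -/
def distGraph {V : Type*} (G : SimpleGraph V) : SimpleGraph V where
  Adj a b := a ≠ b ∧ ∃ p : G.Walk a b, p.length ≤ 3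
  symm := by
    refine ⟨?_⟩
    rintro a b ⟨hne, p, hp⟩
    exact ⟨hne.symm, p.reverse, by simpa using hp⟩
  loopless := by refine ⟨?_⟩; rintro a ⟨hne, -⟩; exact hne rfl

/-- Greedy coloring: a finite graph with all degrees `< n` is properly `n`-colorable. -/
lemma greedy_coloring {V : Type*} [Fintype V] (H : SimpleGraph V) [DecidableRel H.Adj]
    (n : ℕ) (hn : ∀ v : V, (Finset.univ.filter (fun w => H.Adj v w)).card < n) :
    ∃ c : V → Fin n, ∀ ⦃u v : V⦄, H.Adj u v → c u ≠ c v := by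
  classical
  rcases isEmpty_or_nonempty V with hV | hV
  · exact ⟨fun v => isEmptyElim v, fun u => isEmptyElim u⟩
  have hn0 : 0 < n := lt_of_le_of_lt (Nat.zero_le _) (hn (Classical.arbitrary V))
  have key : ∀ s : Finset V, ∃ c : V → Fin n, ∀ u ∈ s, ∀ v ∈ s, H.Adj u v → c u ≠ c v := by
    intro s
    induction s using Finset.induction_on with
    | empty => exact ⟨fun _ => ⟨0, hn0⟩, by simp⟩
    | @insert a s ha ih =>
      obtain ⟨c, hc⟩ := ih
      have hsub : s.filter (fun w => H.Adj a w) ⊆ Finset.univ.filter (fun w => H.Adj a w) := by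
        intro x hx
        simp only [Finset.mem_filter] at hx ⊢
        exact ⟨Finset.mem_univ x, hx.2⟩
      have hcard : ((s.filter (fun w => H.Adj a w)).image c).card < n :=
        lt_of_le_of_lt (Finset.card_image_le.trans (Finset.card_le_card hsub)) (hn a)
      have hcompl : (((s.filter (fun w => H.Adj a w)).image c)ᶜ).Nonempty := by
        rw [← Finset.card_pos, Finset.card_compl, Fintype.card_fin]
        omega
      obtain ⟨x, hx⟩ := hcompl
      rw [Finset.mem_compl] at hx
      refine ⟨Function.update c a x, ?_⟩
      intro u hu v hv hadj
      rcases Finset.mem_insert.mp hu with hua | hu'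
      · rcases Finset.mem_insert.mp hv with hva | hv'
        · subst hua; subst hva; exact absurd hadj (H.loopless.irrefl _)
        · have hva : v ≠ a := fun h => ha (h ▸ hv')
          subst hua
          rw [Function.update_self, Function.update_of_ne hva]
          intro h
          apply hx
          rw [h]
          exact Finset.mem_image_of_mem c (Finset.mem_filter.mpr ⟨hv', hadj⟩)
      · rcases Finset.mem_insert.mp hv with hva | hv'
        · have hua : u ≠ a := fun h => ha (h ▸ hu')
          subst hva
          rw [Function.update_of_ne hua, Function.update_self]
          intro h
          apply hx
          rw [← h]
          exact Finset.mem_image_of_mem c (Finset.mem_filter.mpr ⟨hu', hadj.symm⟩)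
        · have hua : u ≠ a := fun h => ha (h ▸ hu')
          have hva : v ≠ a := fun h => ha (h ▸ hv')
          rw [Function.update_of_ne hua, Function.update_of_ne hva]
          exact hc u hu' v hv' hadj
  obtain ⟨c, hc⟩ := key Finset.univ
  exact ⟨c, fun u v h => hc u (Finset.mem_univ u) v (Finset.mem_univ v) h⟩

/-- Case analysis on a path of length at most 3. -/
lemma walk_cases {V : Type*} {G : SimpleGraph V} {u w : V} (hne : u ≠ w) (p : G.Walk u w)
    (hp : p.IsPath) (hlen : p.length ≤ 3) :
    G.Adj u w ∨ (∃ x, G.Adj u x ∧ G.Adj x w) ∨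
      (∃ x y, G.Adj u x ∧ G.Adj x y ∧ y ≠ u ∧ G.Adj y w ∧ w ≠ x) := by
  rcases p with _ | ⟨h1, p⟩
  · exact absurd rfl hne
  rcases p with _ | ⟨h2, p⟩
  · exact Or.inl h1
  rcases p with _ | ⟨h3, p⟩
  · exact Or.inr (Or.inl ⟨_, h1, h2⟩)
  rcases p with _ | ⟨h4, p⟩
  · refine Or.inr (Or.inr ⟨_, _, h1, h2, ?_, h3, ?_⟩)
    · simp [SimpleGraph.Walk.isPath_def] at hp
      tauto
    · simp [SimpleGraph.Walk.isPath_def] at hp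
      tauto
  · exfalso
    simp only [SimpleGraph.Walk.length_cons] at hlen
    omega

/-- Degree bound for the auxiliary graph. -/
lemma distGraph_deg {V : Type*} [Fintype V] (G : SimpleGraph V) [DecidableRel G.Adj]
    [DecidableRel (distGraph G).Adj] (D : ℕ) (hD : ∀ v : V, G.degree v ≤ D) (a : V) :
    (Finset.univ.filter (fun w => (distGraph G).Adj a w)).card < D ^ 3 - D ^ 2 + D + 1 := by
  classical
  set N := G.neighborFinset with hN
  have hmemN : ∀ x y : V, x ∈ N y ↔ G.Adj y x := by
    intro x y; simp [hN]
  have hsub : Finset.univ.filter (fun w => (distGraph G).Adj a w) ⊆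
      N a ∪ (N a).biUnion (fun x => (N x).erase a) ∪
        (N a).biUnion (fun x => ((N x).erase a).biUnion (fun y => (N y).erase x)) := by
    intro w hw
    simp only [Finset.mem_filter] at hw
    obtain ⟨-, hne, p, hlen⟩ := hw
    rcases walk_cases hne p.bypass p.bypass_isPath (le_trans (Walk.length_bypass_le p) hlen)
      with h | ⟨x, h1, h2⟩ | ⟨x, y, h1, h2, hyu, h3, hwx⟩
    · exact Finset.mem_union_left _ (Finset.mem_union_left _ ((hmemN w a).mpr h))
    · refine Finset.mem_union_left _ (Finset.mem_union_right _ ?_)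
      refine Finset.mem_biUnion.mpr ⟨x, (hmemN x a).mpr h1, ?_⟩
      exact Finset.mem_erase.mpr ⟨hne.symm, (hmemN w x).mpr h2⟩
    · refine Finset.mem_union_right _ ?_
      refine Finset.mem_biUnion.mpr ⟨x, (hmemN x a).mpr h1, ?_⟩
      refine Finset.mem_biUnion.mpr ⟨y, Finset.mem_erase.mpr ⟨hyu, (hmemN y x).mpr h2⟩, ?_⟩
      exact Finset.mem_erase.mpr ⟨hwx, (hmemN w y).mpr h3⟩
  have hcardN : ∀ v : V, (N v).card ≤ D := fun v => hD v
  have he : ∀ x y : V, G.Adj x y → ((N y).erase x).card ≤ D - 1 := by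
    intro x y h
    rw [Finset.card_erase_of_mem ((hmemN x y).mpr h.symm)]
    exact Nat.sub_le_sub_right (hcardN y) 1
  have c2 : ((N a).biUnion (fun x => (N x).erase a)).card ≤ D * (D - 1) := by
    calc ((N a).biUnion (fun x => (N x).erase a)).card
        ≤ ∑ x ∈ N a, ((N x).erase a).card := Finset.card_biUnion_le
      _ ≤ ∑ _x ∈ N a, (D - 1) :=
          Finset.sum_le_sum fun x hx => he a x ((hmemN x a).mp hx)
      _ = (N a).card * (D - 1) := by rw [Finset.sum_const, smul_eq_mul]
      _ ≤ D * (D - 1) := Nat.mul_le_mul_right _ (hcardN a)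
  have c3 : ((N a).biUnion
      (fun x => ((N x).erase a).biUnion (fun y => (N y).erase x))).card ≤
      D * ((D - 1) * (D - 1)) := by
    calc ((N a).biUnion (fun x => ((N x).erase a).biUnion (fun y => (N y).erase x))).card
        ≤ ∑ x ∈ N a, (((N x).erase a).biUnion (fun y => (N y).erase x)).card :=
          Finset.card_biUnion_le
      _ ≤ ∑ _x ∈ N a, ((D - 1) * (D - 1)) := by
          refine Finset.sum_le_sum fun x hx => ?_
          calc (((N x).erase a).biUnion (fun y => (N y).erase x)).card
              ≤ ∑ y ∈ (N x).erase a, ((N y).erase x).card := Finset.card_biUnion_le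
            _ ≤ ∑ _y ∈ (N x).erase a, (D - 1) := by
                refine Finset.sum_le_sum fun y hy => ?_
                exact he x y ((hmemN y x).mp (Finset.mem_of_mem_erase hy))
            _ = ((N x).erase a).card * (D - 1) := by rw [Finset.sum_const, smul_eq_mul]
            _ ≤ (D - 1) * (D - 1) :=
                Nat.mul_le_mul_right _ (he a x ((hmemN x a).mp hx))
      _ = (N a).card * ((D - 1) * (D - 1)) := by rw [Finset.sum_const, smul_eq_mul]
      _ ≤ D * ((D - 1) * (D - 1)) := Nat.mul_le_mul_right _ (hcardN a)
  have htotal : (Finset.univ.filter (fun w => (distGraph G).Adj a w)).card ≤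
      D + D * (D - 1) + D * ((D - 1) * (D - 1)) := by
    calc (Finset.univ.filter (fun w => (distGraph G).Adj a w)).card
        ≤ (N a ∪ (N a).biUnion (fun x => (N x).erase a) ∪
            (N a).biUnion (fun x => ((N x).erase a).biUnion (fun y => (N y).erase x))).card :=
          Finset.card_le_card hsub
      _ ≤ (N a ∪ (N a).biUnion (fun x => (N x).erase a)).card +
            ((N a).biUnion (fun x => ((N x).erase a).biUnion (fun y => (N y).erase x))).card :=
          Finset.card_union_le _ _
      _ ≤ (N a).card + ((N a).biUnion (fun x => (N x).erase a)).card +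
            ((N a).biUnion (fun x => ((N x).erase a).biUnion (fun y => (N y).erase x))).card := by
          have := Finset.card_union_le (N a) ((N a).biUnion (fun x => (N x).erase a))
          omega
      _ ≤ D + D * (D - 1) + D * ((D - 1) * (D - 1)) := by
          have := hcardN a
          omega
  refine lt_of_le_of_lt htotal ?_
  rcases D with _ | d
  · simp
  · have hsub3 : (d + 1) ^ 3 - (d + 1) ^ 2 = (d + 1) ^ 2 * d := by
      have h3 : (d + 1) ^ 3 = (d + 1) ^ 2 * d + (d + 1) ^ 2 := by ring
      rw [h3, Nat.add_sub_cancel]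
    rw [hsub3]
    have hd1 : d + 1 - 1 = d := rfl
    rw [hd1]
    have : (d + 1) + (d + 1) * d + (d + 1) * (d * d) = (d + 1) ^ 2 * d + (d + 1) := by ring
    omega

/-- If a graph `G` has maximum degree `Δ`, then `G` admits a lid-coloring using at most
`Δ³ - Δ² + Δ + 1` colors. -/
theorem stmt16 {V : Type*} [Fintype V] (G : SimpleGraph V) [DecidableRel G.Adj]
    (D : ℕ) (hD : ∀ v : V, G.degree v ≤ D) :
    LidColorable G (D ^ 3 - D ^ 2 + D + 1) := by
  classical
  obtain ⟨c, hc⟩ := greedy_coloring (distGraph G) (D ^ 3 - D ^ 2 + D + 1)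
    (fun v => distGraph_deg G D hD v)
  have hGH : ∀ ⦃u v : V⦄, G.Adj u v → (distGraph G).Adj u v := by
    intro u v h
    exact ⟨h.ne, Walk.cons h Walk.nil, by simp⟩
  have key : ∀ {a b : V}, G.Adj a b → ∀ {w : V}, w ∈ closedNbhd G a → w ∉ closedNbhd G b →
      c '' closedNbhd G a ≠ c '' closedNbhd G b := by
    intro a b hab w hw1 hw2 heq
    have h1 : c w ∈ c '' closedNbhd G a := ⟨w, hw1, rfl⟩
    rw [heq] at h1
    obtain ⟨x, hx, hcx⟩ := h1
    have hwx : w ≠ x := fun h => hw2 (h ▸ hx)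
    have hadj : (distGraph G).Adj w x := by
      refine ⟨hwx, ?_⟩
      rcases (Set.mem_insert_iff.mp hw1) with rfl | haw
      · rcases (Set.mem_insert_iff.mp hx) with rfl | hbx
        · exact ⟨Walk.cons hab Walk.nil, by simp⟩
        · exact ⟨Walk.cons hab (Walk.cons hbx Walk.nil), Nat.le_of_ble_eq_true rfl⟩
      · rcases (Set.mem_insert_iff.mp hx) with rfl | hbx
        · exact ⟨Walk.cons haw.symm (Walk.cons hab Walk.nil), by simp⟩
        · exact ⟨Walk.cons haw.symm (Walk.cons hab (Walk.cons hbx Walk.nil)), Nat.le_of_ble_eq_true rfl⟩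
    exact hc hadj hcx.symm
  refine ⟨c, fun u v h => hc (hGH h), ?_⟩
  intro u v huv hNne
  by_cases hsubst : closedNbhd G u ⊆ closedNbhd G v
  · have hnsub : ¬ closedNbhd G v ⊆ closedNbhd G u :=
      fun h2 => hNne (Set.Subset.antisymm hsubst h2)
    obtain ⟨w, hw1, hw2⟩ := Set.not_subset.mp hnsub
    exact (key huv.symm hw1 hw2).symm
  · obtain ⟨w, hw1, hw2⟩ := Set.not_subset.mp hsubst
    exact key huv hw1 hw2
end

section
/- For every integer n ≥ 3, the graph obtained from the complete graph on n vertices by subdividing each edge exactly twice (replacing each edge uv by a path u-x-y-v through two new internal vertices) satisfies: in any lid-coloring, the n original clique vertices receive pairwise distinct colors; hence its lid-chromatic number is at least n. -/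
open SimpleGraph

/-- The graph obtained from the complete graph on `n` vertices by subdividing each edge
exactly twice: each edge `uv` is replaced by a path `u - (u,v) - (v,u) - v`, where the
subdivision vertex `(u,v)` is the one adjacent to `u`. -/
def subdividedClique (n : ℕ) :
    SimpleGraph (Fin n ⊕ {p : Fin n × Fin n // p.1 ≠ p.2}) :=
  SimpleGraph.fromRel (fun a b =>
    match a, b with
    | Sum.inl u, Sum.inr p => p.val.1 = u
    | Sum.inr p, Sum.inr q => p.val.1 = q.val.2 ∧ p.val.2 = q.val.1
    | _, _ => False)


lemma subCl_closedNbhd (n : ℕ) (u v : Fin n) (h : u ≠ v) :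
    closedNbhd (subdividedClique n) (Sum.inr ⟨(u,v),h⟩) =
      {Sum.inr ⟨(u,v),h⟩, Sum.inl u, Sum.inr ⟨(v,u),h.symm⟩} := by
  ext x
  rcases x with w | ⟨⟨a,b⟩,hab⟩
  · simp [closedNbhd, subdividedClique, SimpleGraph.fromRel_adj, mem_neighborSet, eq_comm]
  · simp [closedNbhd, subdividedClique, SimpleGraph.fromRel_adj, mem_neighborSet]
    constructor
    · rintro (⟨rfl,rfl⟩ | ⟨-, (⟨rfl,rfl⟩|⟨rfl,rfl⟩)⟩) <;> simp
    · rintro (⟨rfl,rfl⟩ | ⟨rfl,rfl⟩)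
      · left; exact ⟨rfl, rfl⟩
      · right
        refine ⟨?_, ?_⟩
        · exact fun hba _ => h hba
        · left; exact ⟨rfl, rfl⟩

/-- For every `n ≥ 3`, in any lid-coloring of the twice-subdivided complete graph on `n`
vertices the `n` original clique vertices receive pairwise distinct colors; hence at
least `n` colors are used. -/
theorem stmt17 (n : ℕ) (hn : 3 ≤ n) {α : Type*}
    (c : Fin n ⊕ {p : Fin n × Fin n // p.1 ≠ p.2} → α)
    (hc : IsLidColoring (subdividedClique n) c) :
    (Function.Injective fun i : Fin n => c (Sum.inl i)) ∧
    n ≤ (Set.range c).ncard := by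
  have hinj : Function.Injective fun i : Fin n => c (Sum.inl i) := by
    intro u v hcol
    simp only at hcol
    by_contra huv
    have hadj : (subdividedClique n).Adj (Sum.inr ⟨(u,v),huv⟩)
        (Sum.inr ⟨(v,u),Ne.symm huv⟩) := by
      rw [subdividedClique, SimpleGraph.fromRel_adj]
      refine ⟨?_, Or.inl ⟨rfl, rfl⟩⟩
      intro heq
      simp only [Sum.inr.injEq, Subtype.mk.injEq, Prod.mk.injEq] at heq
      exact huv heq.2.symm
    have hne : closedNbhd (subdividedClique n) (Sum.inr ⟨(u,v),huv⟩) ≠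
        closedNbhd (subdividedClique n) (Sum.inr ⟨(v,u),Ne.symm huv⟩) := by
      rw [subCl_closedNbhd n u v huv, subCl_closedNbhd n v u (Ne.symm huv)]
      intro hset
      have hmem : (Sum.inl u : Fin n ⊕ {p : Fin n × Fin n // p.1 ≠ p.2}) ∈
          ({Sum.inr ⟨(v,u),Ne.symm huv⟩, Sum.inl v, Sum.inr ⟨(u,v),huv⟩} :
            Set (Fin n ⊕ {p : Fin n × Fin n // p.1 ≠ p.2})) := by
        rw [← hset]; simp
      simp at hmem
      exact huv hmem
    apply hc.2 hadj hne
    rw [subCl_closedNbhd n u v huv, subCl_closedNbhd n v u (Ne.symm huv)]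
    simp only [Set.image_insert_eq, Set.image_singleton, hcol]
    ext y; simp; tauto
  refine ⟨hinj, ?_⟩
  have h1 : Nat.card (Set.range fun i : Fin n => c (Sum.inl i)) = n := by
    rw [Nat.card_range_of_injective hinj, Nat.card_eq_fintype_card, Fintype.card_fin]
  calc n = (Set.range fun i : Fin n => c (Sum.inl i)).ncard := by
          rw [← Nat.card_coe_set_eq, h1]
    _ ≤ (Set.range c).ncard :=
        Set.ncard_le_ncard (by rintro x ⟨i, rfl⟩; exact ⟨Sum.inl i, rfl⟩)
          (Set.finite_range c)
end

section
/- Every cycle Cₙ of length n ≥ 12 admits a lid-coloring c using at most 5 colors such that every vertex v satisfies |c(N[v])| = 3, i.e. exactly three colors appear in each closed neighborhood. In particular χ_lid(Cₙ) ≤ 5 for all n ≥ 12. -/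
open SimpleGraph

/-- Block coloring value: `b` blocks of `01234` followed by blocks of `0123`. -/
def lidval (b x : ℕ) : ℕ := if x < 5*b then x % 5 else (x - 5*b) % 4

lemma lidval_lt (b x : ℕ) : lidval b x < 5 := by
  unfold lidval; split_ifs <;> omega

/-- Positions at cyclic distance 1, 2, or 3 get different values, when the number of
blocks of `01234` is `n % 4` (their total length `5 * (n % 4)` is then `≡ n [MOD 4]`
and at most `15 ≤ n`, so the rest splits into blocks of `0123`). -/
lemma lidval_key (n x k : ℕ) (hn : 12 ≤ n) (hx : x < n) (hk1 : 1 ≤ k) (hk3 : k ≤ 3) :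
    lidval (n % 4) x ≠ lidval (n % 4) ((x + k) % n) := by
  have hy : (x + k) % n = x + k ∨ x + k = n + (x + k) % n := by
    rcases Nat.lt_or_ge (x + k) n with h | h
    · exact Or.inl (Nat.mod_eq_of_lt h)
    · right
      have h2 : x + k - n < n := by omega
      rw [Nat.mod_eq_sub_mod h, Nat.mod_eq_of_lt h2]
      omega
  have hylt : (x + k) % n < n := Nat.mod_lt _ (by omega)
  unfold lidval
  split_ifs <;> omega

/-- The coloring as a function `Fin n → Fin 5`. -/
def lidc (n : ℕ) (v : Fin n) : Fin 5 := ⟨lidval (n % 4) v.val, lidval_lt _ _⟩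

open Fin.NatCast in
lemma lidc_key {n : ℕ} [NeZero n] (hn : 12 ≤ n) (u : Fin n) (k : ℕ) (hk1 : 1 ≤ k)
    (hk3 : k ≤ 3) : lidc n u ≠ lidc n (u + (k : Fin n)) := by
  have hkn : ((k : Fin n)).val = k := by
    rw [Fin.val_natCast, Nat.mod_eq_of_lt (by omega)]
  intro h
  apply lidval_key n u.val k hn u.isLt hk1 hk3
  have h2 : (u + (k : Fin n)).val = (u.val + k) % n := by
    rw [Fin.add_def, hkn]
  rw [← h2]
  exact congrArg Fin.val h

open Fin.NatCast Fin.CommRing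

/-- Every cycle `Cₙ` with `n ≥ 12` admits a lid-coloring using at most 5 colors in which
exactly three colors appear in each closed neighborhood; in particular `χ_lid(Cₙ) ≤ 5`. -/
theorem stmt18 (n : ℕ) (hn : 12 ≤ n) :
    ∃ c : Fin n → Fin 5, IsLidColoring (SimpleGraph.cycleGraph n) c ∧
      ∀ v : Fin n, (c '' closedNbhd (SimpleGraph.cycleGraph n) v).ncard = 3 := by
  obtain ⟨m, rfl⟩ : ∃ m, n = m + 2 := ⟨n - 2, by omega⟩
  haveI : NeZero (m + 2) := ⟨by omega⟩
  set c := lidc (m + 2) with hc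
  -- coloring keys at distance 1, 2, 3
  have key1 : ∀ u : Fin (m+2), c u ≠ c (u + 1) := by
    intro u
    have := lidc_key hn u 1 le_rfl (by norm_num)
    rwa [Nat.cast_one] at this
  have key2 : ∀ u : Fin (m+2), c u ≠ c (u + 2) := by
    intro u
    have := lidc_key hn u 2 (by norm_num) (by norm_num)
    rwa [Nat.cast_ofNat] at this
  have key3 : ∀ u : Fin (m+2), c u ≠ c (u + 3) := by
    intro u
    have := lidc_key hn u 3 (by norm_num) (by norm_num)
    rwa [Nat.cast_ofNat] at this
  -- closed neighborhood description
  have hN : ∀ v : Fin (m+2), closedNbhd (cycleGraph (m+2)) v = {v - 1, v, v + 1} := by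
    intro v
    unfold closedNbhd
    rw [cycleGraph_neighborSet]
    ext u
    simp only [Set.mem_insert_iff, Set.mem_singleton_iff]
    tauto
  -- distinctness of the three colors around v
  have d12 : ∀ v : Fin (m+2), c (v - 1) ≠ c v := by
    intro v
    have := key1 (v - 1)
    rwa [show v - 1 + 1 = v by ring] at this
  have d13 : ∀ v : Fin (m+2), c (v - 1) ≠ c (v + 1) := by
    intro v
    have := key2 (v - 1)
    rwa [show v - 1 + 2 = v + 1 by ring] at this
  have d14 : ∀ v : Fin (m+2), c (v - 1) ≠ c (v + 2) := by
    intro v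
    have := key3 (v - 1)
    rwa [show v - 1 + 3 = v + 2 by ring] at this
  have himg : ∀ v : Fin (m+2),
      c '' closedNbhd (cycleGraph (m+2)) v = {c (v - 1), c v, c (v + 1)} := by
    intro v
    rw [hN]
    simp [Set.image_insert_eq]
  -- image inequality for consecutive vertices
  have himgne : ∀ u : Fin (m+2),
      c '' closedNbhd (cycleGraph (m+2)) u ≠ c '' closedNbhd (cycleGraph (m+2)) (u + 1) := by
    intro u h
    rw [himg, himg, show u + 1 - 1 = u by ring, show u + 1 + 1 = u + 2 by ring] at h
    have hmem : c (u - 1) ∈ ({c u, c (u + 1), c (u + 2)} : Set (Fin 5)) := by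
      rw [← h]; exact Set.mem_insert _ _
    rcases hmem with h1 | h1 | h1
    · exact d12 u h1
    · exact d13 u h1
    · exact d14 u h1
  refine ⟨c, ⟨?_, ?_⟩, ?_⟩
  · -- proper coloring
    intro u v hadj
    rw [cycleGraph_adj] at hadj
    rcases hadj with h1 | h1
    · rw [sub_eq_iff_eq_add] at h1
      rw [h1, show 1 + v = v + 1 by ring]
      exact (key1 v).symm
    · rw [sub_eq_iff_eq_add] at h1
      rw [h1, show 1 + u = u + 1 by ring]
      exact key1 u
  · -- lid condition
    intro u v hadj _
    rw [cycleGraph_adj] at hadj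
    rcases hadj with h1 | h1
    · rw [sub_eq_iff_eq_add] at h1
      rw [h1, show 1 + v = v + 1 by ring]
      exact (himgne v).symm
    · rw [sub_eq_iff_eq_add] at h1
      rw [h1, show 1 + u = u + 1 by ring]
      exact himgne u
  · -- exactly three colors in each closed neighborhood
    intro v
    rw [himg, Set.ncard_eq_three]
    exact ⟨c (v - 1), c v, c (v + 1), d12 v, d13 v, key1 v, rfl⟩
end
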